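/- With m,n ≥ 2, in O_q(M_{m,n})[X_{1n}⁻¹] with X'_{ij} = X_{ij} − q⁻¹X_{1j}X_{in}X_{1n}⁻¹, for 1 ≤ j ≤ n−1 and 2 ≤ k ≤ m one has: X_{1j}X'_{kl} − X'_{kl}X_{1j} = (q⁻¹−q)X_{1l}X'_{kj} for 1 ≤ l < j; X_{1j}X'_{kj} = q⁻¹X'_{kj}X_{1j}; and X_{1j}X'_{kl} = X'_{kl}X_{1j} for j < l ≤ n−1. -/

import Mathlib

noncomputable section
open scoped BigOperators

/-- The defining relations of an `m × n` `q`-quantum matrix. -/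
def IsQMat {k A : Type*} [Field k] [Ring A] [Algebra k A] (q : k) {m n : ℕ}
    (X : Fin m → Fin n → A) : Prop :=
  (∀ (i : Fin m) (j l : Fin n), j < l → X i j * X i l = q • (X i l * X i j)) ∧
  (∀ (i r : Fin m) (j : Fin n), i < r → X i j * X r j = q • (X r j * X i j)) ∧
  (∀ (i r : Fin m) (j l : Fin n), i < r → j < l → X i l * X r j = X r j * X i l) ∧
  (∀ (i r : Fin m) (j l : Fin n), i < r → j < l →
    X i j * X r l - X r l * X i j = (q - q⁻¹) • (X i l * X r j))

/-- The relations defining `O_q(M_{m,n})` as a quotient of the free algebra. -/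
inductive QMRel (k : Type*) [Field k] (q : k) (m n : ℕ) :
    FreeAlgebra k (Fin m × Fin n) → FreeAlgebra k (Fin m × Fin n) → Prop
  | row (i : Fin m) (j l : Fin n) (h : j < l) :
      QMRel k q m n (FreeAlgebra.ι k (i, j) * FreeAlgebra.ι k (i, l))
        (q • (FreeAlgebra.ι k (i, l) * FreeAlgebra.ι k (i, j)))
  | col (i r : Fin m) (j : Fin n) (h : i < r) :
      QMRel k q m n (FreeAlgebra.ι k (i, j) * FreeAlgebra.ι k (r, j))
        (q • (FreeAlgebra.ι k (r, j) * FreeAlgebra.ι k (i, j)))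
  | anti (i r : Fin m) (j l : Fin n) (h1 : i < r) (h2 : j < l) :
      QMRel k q m n (FreeAlgebra.ι k (i, l) * FreeAlgebra.ι k (r, j))
        (FreeAlgebra.ι k (r, j) * FreeAlgebra.ι k (i, l))
  | diag (i r : Fin m) (j l : Fin n) (h1 : i < r) (h2 : j < l) :
      QMRel k q m n (FreeAlgebra.ι k (i, j) * FreeAlgebra.ι k (r, l))
        (FreeAlgebra.ι k (r, l) * FreeAlgebra.ι k (i, j) +
          (q - q⁻¹) • (FreeAlgebra.ι k (i, l) * FreeAlgebra.ι k (r, j)))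

/-- The quantum matrix algebra `O_q(M_{m,n})`. -/
abbrev OqM (k : Type*) [Field k] (q : k) (m n : ℕ) := RingQuot (QMRel k q m n)

/-- The canonical generators `X_{ij}` of `O_q(M_{m,n})`. -/
def qX (k : Type*) [Field k] (q : k) (m n : ℕ) (i : Fin m) (j : Fin n) : OqM k q m n :=
  RingQuot.mkAlgHom k (QMRel k q m n) (FreeAlgebra.ι k (i, j))

/-- The number of inversions (the length `ℓ(σ)`) of a permutation of `Fin t`. -/
def invCount {t : ℕ} (σ : Equiv.Perm (Fin t)) : ℕ :=
  Finset.card (Finset.univ.filter (fun p : Fin t × Fin t => p.1 < p.2 ∧ σ p.2 < σ p.1))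

/-- The quantum determinant of a `t × t` matrix with entries in an algebra:
`Σ_σ (-q)^{ℓ(σ)} M_{1,σ(1)} ⋯ M_{t,σ(t)}`. -/
def qdet {k : Type*} [Field k] {A : Type*} [Ring A] [Algebra k A] (q : k) {t : ℕ}
    (M : Fin t → Fin t → A) : A :=
  ∑ σ : Equiv.Perm (Fin t), ((-q) ^ invCount σ) • (List.ofFn (fun i => M i (σ i))).prod

/-- The quantum minor `[I|J]` of the matrix `X` on rows `I` and columns `J`. -/
def qminor {k : Type*} [Field k] {A : Type*} [Ring A] [Algebra k A] (q : k) {m n t : ℕ}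
    (X : Fin m → Fin n → A) (I : Finset (Fin m)) (J : Finset (Fin n))
    (hI : I.card = t) (hJ : J.card = t) : A :=
  qdet q (fun a b => X (I.orderIsoOfFin hI a) (J.orderIsoOfFin hJ b))

/-- The elements `X'_{ij} = X_{ij} - q⁻¹ X_{1j} X_{in} X_{1n}⁻¹` in a localisation of
`O_q(M_{m,n})` at the normal element `X_{1n}`, where `φ` is the localisation map and
`u = X_{1n}⁻¹`. -/
def Xp {k B : Type*} [Field k] [Ring B] [Algebra k B] (q : k) {m n : ℕ}
    (hm : 0 < m) (hn : 0 < n) (φ : OqM k q m n →ₐ[k] B) (u : B)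
    (i : Fin m) (j : Fin n) : B :=
  φ (qX k q m n i j) -
    q⁻¹ • (φ (qX k q m n ⟨0, hm⟩ j) * φ (qX k q m n i ⟨n - 1, by omega⟩) * u)

/-! With `y = X_{rν} X_{i₀ν}⁻¹`, the relations between rows `i₀ < r` and columns `j < ν` give
`X_{i₀j} y = q⁻¹ y X_{i₀j} + (q - q⁻¹) X_{rj}`, whence also `X'_{rj} = q⁻² (X_{rj} - y X_{i₀j})`.
Each relation then follows by moving `X_{i₀j}` past `X_{rl}` and `X_{i₀l}` with the defining
relations and past `y` with this identity. -/

section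

variable {k B : Type*} [Field k] [Ring B] [Algebra k B]

theorem inv_mul_eq_smul_mul_inv {c : k} {x y u : B} (h : x * y = c • (y * x))
    (hyu : y * u = 1) (huy : u * y = 1) : u * x = c • (x * u) :=
  calc u * x = u * (x * y) * u := by rw [mul_assoc u, mul_assoc, hyu, mul_one]
    _ = c • (u * y * (x * u)) := by
      rw [h]; simp only [mul_smul_comm, smul_mul_assoc, mul_assoc]
    _ = c • (x * u) := by rw [huy, one_mul]

theorem isQMat_map_qX {q : k} {m n : ℕ} (φ : OqM k q m n →ₐ[k] B) :
    IsQMat q (fun i j => φ (qX k q m n i j)) := by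
  refine ⟨fun i j l h => ?_, fun i r j h => ?_, fun i r j l h1 h2 => ?_,
    fun i r j l h1 h2 => ?_⟩
  · simpa only [qX, map_mul, map_smul] using
      congrArg φ (RingQuot.mkAlgHom_rel k (QMRel.row (k := k) (q := q) i j l h))
  · simpa only [qX, map_mul, map_smul] using
      congrArg φ (RingQuot.mkAlgHom_rel k (QMRel.col (k := k) (q := q) i r j h))
  · simpa only [qX, map_mul] using
      congrArg φ (RingQuot.mkAlgHom_rel k (QMRel.anti (k := k) (q := q) i r j l h1 h2))
  · rw [sub_eq_iff_eq_add]
    simpa only [qX, map_mul, map_smul, map_add, add_comm] using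
      congrArg φ (RingQuot.mkAlgHom_rel k (QMRel.diag (k := k) (q := q) i r j l h1 h2))

variable {m n : ℕ}

/-- `Xp` for an arbitrary pivot `X i₀ ν` with inverse `u`; `Xp` is the case `i₀ = 0`,
`ν = n - 1`. -/
def xPrime (q : k) (X : Fin m → Fin n → B) (i₀ : Fin m) (ν : Fin n) (u : B)
    (i : Fin m) (l : Fin n) : B :=
  X i l - q⁻¹ • (X i₀ l * X i ν * u)

namespace IsQMat

variable {q : k} {X : Fin m → Fin n → B} {i₀ r : Fin m} {ν : Fin n} {u : B}

theorem mul_pivot_inv (hX : IsQMat q X) (hq : q ≠ 0) (hu1 : X i₀ ν * u = 1)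
    (hu2 : u * X i₀ ν = 1) {j : Fin n} (hj : j < ν) :
    X i₀ j * u = q⁻¹ • (u * X i₀ j) := by
  rw [inv_mul_eq_smul_mul_inv (hX.1 i₀ j ν hj) hu1 hu2, smul_smul, inv_mul_cancel₀ hq,
    one_smul]

theorem mul_pivotCol_mul_inv (hX : IsQMat q X) (hq : q ≠ 0) (hu1 : X i₀ ν * u = 1)
    (hu2 : u * X i₀ ν = 1) (hr : i₀ < r) {j : Fin n} (hj : j < ν) :
    X i₀ j * (X r ν * u) = q⁻¹ • (X r ν * u * X i₀ j) + (q - q⁻¹) • X r j := by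
  have hdiag := hX.2.2.2 i₀ r j ν hr hj
  rw [sub_eq_iff_eq_add] at hdiag
  have hpivot : X i₀ ν * X r j * u = X r j := by
    rw [hX.2.2.1 i₀ r j ν hr hj, mul_assoc, hu1, mul_one]
  rw [← mul_assoc, hdiag, add_mul, smul_mul_assoc, hpivot, mul_assoc (X r ν),
    hX.mul_pivot_inv hq hu1 hu2 hj, mul_smul_comm, ← mul_assoc, add_comm]

theorem xPrime_eq (hX : IsQMat q X) (hq : q ≠ 0) (hu1 : X i₀ ν * u = 1)
    (hu2 : u * X i₀ ν = 1) (hr : i₀ < r) {l : Fin n} (hl : l < ν) :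
    xPrime q X i₀ ν u r l = q⁻¹ ^ 2 • (X r l - X r ν * u * X i₀ l) := by
  rw [xPrime, mul_assoc, hX.mul_pivotCol_mul_inv hq hu1 hu2 hr hl]
  match_scalars <;> field_simp; ring

theorem mul_xPrime_sub_xPrime_mul_of_lt (hX : IsQMat q X) (hq : q ≠ 0)
    (hu1 : X i₀ ν * u = 1) (hu2 : u * X i₀ ν = 1) (hr : i₀ < r) {j l : Fin n}
    (hj : j < ν) (hl : l < j) :
    X i₀ j * xPrime q X i₀ ν u r l - xPrime q X i₀ ν u r l * X i₀ j
      = (q⁻¹ - q) • (X i₀ l * xPrime q X i₀ ν u r j) := by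
  have hrow : X i₀ j * X i₀ l = q⁻¹ • (X i₀ l * X i₀ j) := by
    rw [hX.1 i₀ l j hl, smul_smul, inv_mul_cancel₀ hq, one_smul]
  rw [hX.xPrime_eq hq hu1 hu2 hr hj, xPrime, mul_sub, mul_smul_comm, hX.2.2.1 i₀ r l j hr hl,
    mul_assoc, ← mul_assoc (X i₀ j), hrow, smul_mul_assoc, mul_assoc,
    hX.mul_pivotCol_mul_inv hq hu1 hu2 hr hj]
  simp only [mul_add, mul_sub, sub_mul, mul_smul_comm, smul_mul_assoc, smul_add, smul_sub,
    smul_smul, mul_assoc]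
  match_scalars <;> field_simp <;> ring

theorem mul_xPrime_same_col (hX : IsQMat q X) (hq : q ≠ 0) (hu1 : X i₀ ν * u = 1)
    (hu2 : u * X i₀ ν = 1) (hr : i₀ < r) {j : Fin n} (hj : j < ν) :
    X i₀ j * xPrime q X i₀ ν u r j = q⁻¹ • (xPrime q X i₀ ν u r j * X i₀ j) := by
  conv_lhs => rw [hX.xPrime_eq hq hu1 hu2 hr hj, mul_smul_comm, mul_sub, hX.2.1 i₀ r j hr]
  simp only [xPrime, sub_mul, smul_mul_assoc, smul_sub, smul_smul, mul_assoc]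
  match_scalars <;> field_simp

theorem commute_xPrime_of_lt (hX : IsQMat q X) (hq : q ≠ 0) (hu1 : X i₀ ν * u = 1)
    (hu2 : u * X i₀ ν = 1) (hr : i₀ < r) {j l : Fin n} (hj : j < ν) (hl : j < l) :
    Commute (X i₀ j) (xPrime q X i₀ ν u r l) := by
  change _ * _ = _ * _
  have hdiag := hX.2.2.2 i₀ r j l hr hl
  rw [sub_eq_iff_eq_add] at hdiag
  rw [xPrime, mul_sub, mul_smul_comm, hdiag, mul_assoc, ← mul_assoc (X i₀ j), hX.1 i₀ j l hl,
    smul_mul_assoc, mul_assoc, hX.mul_pivotCol_mul_inv hq hu1 hu2 hr hj]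
  simp only [mul_add, sub_mul, mul_smul_comm, smul_mul_assoc, smul_add, smul_smul, mul_assoc]
  match_scalars <;> field_simp; ring

end IsQMat

end

/-- Relations between the first-row generators `X_{1j}` and the elements `X'_{kl}` in
`O_q(M_{m,n})[X_{1n}⁻¹]` (one-based: `1 ≤ j ≤ n-1`, `2 ≤ k ≤ m`). -/
theorem relations_first_row_with_xprime {k B : Type*} [Field k] [Ring B] [Algebra k B]
    (q : k) (hq : q ≠ 0) {m n : ℕ} (hm : 2 ≤ m) (hn : 2 ≤ n)
    (φ : OqM k q m n →ₐ[k] B) (u : B)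
    (hu1 : φ (qX k q m n ⟨0, by omega⟩ ⟨n - 1, by omega⟩) * u = 1)
    (hu2 : u * φ (qX k q m n ⟨0, by omega⟩ ⟨n - 1, by omega⟩) = 1)
    (j : Fin n) (hj : (j : ℕ) < n - 1) (r : Fin m) (hr : 1 ≤ (r : ℕ)) :
    (∀ l : Fin n, (l : ℕ) < (j : ℕ) →
        φ (qX k q m n ⟨0, by omega⟩ j) * Xp q (by omega) (by omega) φ u r l
            - Xp q (by omega) (by omega) φ u r l * φ (qX k q m n ⟨0, by omega⟩ j)
          = (q⁻¹ - q) • (φ (qX k q m n ⟨0, by omega⟩ l) *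
              Xp q (by omega) (by omega) φ u r j)) ∧
    (φ (qX k q m n ⟨0, by omega⟩ j) * Xp q (by omega) (by omega) φ u r j
        = q⁻¹ • (Xp q (by omega) (by omega) φ u r j * φ (qX k q m n ⟨0, by omega⟩ j))) ∧
    (∀ l : Fin n, (j : ℕ) < (l : ℕ) → (l : ℕ) < n - 1 →
        φ (qX k q m n ⟨0, by omega⟩ j) * Xp q (by omega) (by omega) φ u r l
          = Xp q (by omega) (by omega) φ u r l * φ (qX k q m n ⟨0, by omega⟩ j)) := by
  have hX := isQMat_map_qX (q := q) φ
  have hr : (⟨0, by omega⟩ : Fin m) < r := hr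
  have hj : j < (⟨n - 1, by omega⟩ : Fin n) := hj
  exact ⟨fun l hl => hX.mul_xPrime_sub_xPrime_mul_of_lt hq hu1 hu2 hr hj hl,
    hX.mul_xPrime_same_col hq hu1 hu2 hr hj,
    fun l hl _ => (hX.commute_xPrime_of_lt hq hu1 hu2 hr hj hl).eq⟩
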